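/- arXiv:1501.03113 — 7 statements merged into one kernel-verified Lean document; each statement's English description precedes it below -/
import Mathlib

section
/- If (a_n) is a strictly increasing sequence of natural numbers, all greater than 1, pairwise relatively prime, and every a_n is composite, then the series ∑ 1/a_n converges, and moreover its sum is at most P(2) = ∑_{p prime} 1/p². -/
/-!
Send each `a n` to its least prime factor `p n`. Pairwise coprimality makes `n ↦ p n` injective,
and since `a n` is composite, `p n ^ 2 ≤ a n`. Hence `∑ 1 / a n` is dominated termwise by a
subseries of `∑ₚ 1 / p²`.
-/

namespace Nat

theorem Primes.summable_one_div_sq : Summable fun p : Nat.Primes => (1 : ℝ) / (p : ℕ) ^ 2 :=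
  (Nat.Primes.summable_rpow.mpr (by norm_num : (-2 : ℝ) < -1)).congr fun p => by
    rw [Real.rpow_neg (by positivity), Real.rpow_two, one_div]

def minFacPrime (n : ℕ) (hn : n ≠ 1) : Nat.Primes :=
  ⟨n.minFac, minFac_prime hn⟩

theorem minFacPrime_injective {ι : Type*} {a : ι → ℕ} (ha : ∀ i, a i ≠ 1)
    (hcop : Pairwise fun i j => Coprime (a i) (a j)) :
    Function.Injective fun i => minFacPrime (a i) (ha i) := by
  intro i j hij
  by_contra hne
  have hdvd_j : (a i).minFac ∣ a j := by
    rw [show (a i).minFac = (a j).minFac from congrArg Subtype.val hij]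
    exact minFac_dvd _
  exact (minFac_prime (ha i)).one_lt.ne'
    (eq_one_of_dvd_coprimes (hcop hne) (minFac_dvd _) hdvd_j)

theorem one_div_le_one_div_minFac_sq {n : ℕ} (hn : 0 < n) (hnp : ¬ n.Prime) :
    (1 : ℝ) / n ≤ 1 / (n.minFac : ℝ) ^ 2 :=
  one_div_le_one_div_of_le (by have := minFac_pos n; positivity)
    (by exact_mod_cast minFac_sq_le_self hn hnp)

end Nat

theorem stmt_0_general (a : ℕ → ℕ) (h1 : ∀ n, 1 < a n)
    (hcop : ∀ m n, m ≠ n → Nat.Coprime (a m) (a n))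
    (hcomp : ∀ n, ¬ (a n).Prime) :
    Summable (fun n => (1 : ℝ) / a n) ∧
      (∑' n, (1 : ℝ) / a n) ≤ ∑' p : Nat.Primes, (1 : ℝ) / (p : ℕ) ^ 2 := by
  have ha : ∀ n, a n ≠ 1 := fun n => (h1 n).ne'
  set P := fun n => Nat.minFacPrime (a n) (ha n)
  have hP : Function.Injective P := Nat.minFacPrime_injective ha hcop
  have hle : ∀ n, (1 : ℝ) / a n ≤ 1 / ((P n : ℕ) : ℝ) ^ 2 := fun n =>
    Nat.one_div_le_one_div_minFac_sq (by linarith [h1 n]) (hcomp n)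
  have hsum : Summable fun n => (1 : ℝ) / a n :=
    .of_nonneg_of_le (fun n => by positivity) hle
      (Nat.Primes.summable_one_div_sq.comp_injective hP)
  exact ⟨hsum, hsum.tsum_le_tsum_of_inj P hP (fun p _ => by positivity) hle
    Nat.Primes.summable_one_div_sq⟩

theorem stmt_0 (a : ℕ → ℕ) (hmono : StrictMono a) (h1 : ∀ n, 1 < a n)
    (hcop : ∀ m n, m ≠ n → Nat.Coprime (a m) (a n))
    (hcomp : ∀ n, ¬ (a n).Prime) :
    Summable (fun n => (1 : ℝ) / a n) ∧
      (∑' n, (1 : ℝ) / a n) ≤ ∑' p : Nat.Primes, (1 : ℝ) / (p : ℕ) ^ 2 :=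
  stmt_0_general a h1 hcop hcomp
end

section
/- If (a_n) is a strictly increasing sequence of natural numbers, all greater than 1 and pairwise relatively prime, and the series ∑ 1/a_n diverges, then the sum of 1/a_n restricted to those n for which a_n is prime also diverges. -/
theorem stmt_3 (a : ℕ → ℕ) (hmono : StrictMono a) (h1 : ∀ n, 1 < a n)
    (hcop : ∀ m n, m ≠ n → Nat.Coprime (a m) (a n))
    (hdiv : ¬ Summable (fun n => (1 : ℝ) / a n)) :
    ¬ Summable (fun n => if (a n).Prime then (1 : ℝ) / a n else 0) := by
  intro hs
  apply hdiv
  have hp_inj : Function.Injective (fun n => (a n).minFac) := by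
    intro m n h
    by_contra hne
    have hd1 : (a m).minFac ∣ a m := Nat.minFac_dvd _
    have hd2 : (a m).minFac ∣ a n := by
      simp only [] at h; rw [show (a m).minFac = (a n).minFac from h]; exact Nat.minFac_dvd _
    have hdg : (a m).minFac ∣ Nat.gcd (a m) (a n) := Nat.dvd_gcd hd1 hd2
    rw [hcop m n hne] at hdg
    have h2 : 2 ≤ (a m).minFac := (Nat.minFac_prime (Nat.ne_of_gt (h1 m))).two_le
    have := Nat.le_of_dvd one_pos hdg
    omega
  have hsum2 : Summable (fun k : ℕ => 1 / (k : ℝ) ^ 2) :=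
    (Real.summable_one_div_nat_pow).mpr one_lt_two
  have hcomp : Summable (fun n => 1 / ((a n).minFac : ℝ) ^ 2) :=
    hsum2.comp_injective hp_inj
  have key : Summable (fun n => if (a n).Prime then (0 : ℝ) else 1 / a n) := by
    apply Summable.of_nonneg_of_le _ _ hcomp
    · intro n
      split <;> positivity
    · intro n
      split
      · positivity
      · rename_i hnp
        apply one_div_le_one_div_of_le
        · have h2 : 0 < (a n).minFac := Nat.minFac_pos _
          have : (0:ℝ) < ((a n).minFac : ℝ) := by exact_mod_cast h2
          positivity
        · exact_mod_cast Nat.minFac_sq_le_self (by have := h1 n; omega) hnp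
  have := hs.add key
  apply this.congr
  intro n
  split <;> simp
end

section
/- Let s ≥ 2 and let (a_n) be a strictly increasing sequence of natural numbers, all greater than 1 and pairwise relatively prime. If ∑ 1/a_n > P(s), where P(s) = ∑_{p prime} 1/p^s, then there exists k such that a_k has at most s − 1 prime factors counted with multiplicity. -/
open scoped ENNReal

/-!
If every `a n` had at least `s` prime factors, then `(a n).minFac ^ s ≤ a n`. Pairwise
coprimality makes `n ↦ (a n).minFac` an injection into the primes, so
`∑ 1 / a n ≤ ∑ 1 / (a n).minFac ^ s ≤ P(s)`.
-/

namespace Nat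

theorem minFac_pow_length_primeFactorsList_le {n : ℕ} (hn : n ≠ 0) :
    n.minFac ^ n.primeFactorsList.length ≤ n :=
  calc n.minFac ^ n.primeFactorsList.length ≤ n.primeFactorsList.prod :=
        List.pow_card_le_prod _ _ fun _ hp =>
          minFac_le_of_dvd (prime_of_mem_primeFactorsList hp).two_le
            (dvd_of_mem_primeFactorsList hp)
    _ = n := prod_primeFactorsList hn

theorem minFac_injective_of_pairwise_coprime {ι : Type*} {a : ι → ℕ} (h1 : ∀ i, a i ≠ 1)
    (hcop : Pairwise fun i j => Coprime (a i) (a j)) :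
    Function.Injective fun i => (a i).minFac := by
  intro i j hij
  by_contra hne
  have hdvd : (a i).minFac ∣ a j := (congrArg (· ∣ a j) hij).mpr (minFac_dvd (a j))
  exact (minFac_prime (h1 i)).ne_one (eq_one_of_dvd_coprimes (hcop hne) (minFac_dvd _) hdvd)

theorem tsum_one_div_le_primeZeta_of_le_length_primeFactorsList {ι : Type*} (s : ℕ)
    {a : ι → ℕ} (h1 : ∀ i, 1 < a i) (hcop : Pairwise fun i j => Coprime (a i) (a j))
    (hΩ : ∀ i, s ≤ (a i).primeFactorsList.length) :
    ∑' i, (1 : ℝ≥0∞) / a i ≤ ∑' p : Primes, (1 : ℝ≥0∞) / (p : ℕ) ^ s := by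
  let minFacPrime : ι → Primes := fun i => ⟨(a i).minFac, minFac_prime (h1 i).ne'⟩
  have hinj : Function.Injective minFacPrime := fun i j hij =>
    minFac_injective_of_pairwise_coprime (fun i => (h1 i).ne') hcop (congrArg Subtype.val hij)
  refine ENNReal.summable.tsum_le_tsum_of_inj minFacPrime hinj (fun _ _ => _root_.zero_le)
    (fun i => ENNReal.div_le_div_left ?_ 1) ENNReal.summable
  have hpow : (a i).minFac ^ s ≤ a i :=
    (Nat.pow_le_pow_right (minFac_pos _) (hΩ i)).trans
      (minFac_pow_length_primeFactorsList_le (zero_lt_of_lt (h1 i)).ne')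
  exact_mod_cast hpow

end Nat

theorem stmt_4_general (s : ℕ) (a : ℕ → ℕ)
    (h1 : ∀ n, 1 < a n)
    (hcop : ∀ m n, m ≠ n → Nat.Coprime (a m) (a n))
    (hgt : (∑' p : Nat.Primes, (1 : ℝ≥0∞) / (p : ℕ) ^ s) < ∑' n, (1 : ℝ≥0∞) / a n) :
    ∃ k, (a k).primeFactorsList.length ≤ s - 1 := by
  by_contra! hcon
  have hΩ : ∀ k, s ≤ (a k).primeFactorsList.length := fun k => by have := hcon k; omega
  exact (Nat.tsum_one_div_le_primeZeta_of_le_length_primeFactorsList s h1 hcop hΩ).not_gt hgt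

theorem stmt_4 (s : ℕ) (hs : 2 ≤ s) (a : ℕ → ℕ) (hmono : StrictMono a)
    (h1 : ∀ n, 1 < a n)
    (hcop : ∀ m n, m ≠ n → Nat.Coprime (a m) (a n))
    (hgt : (∑' p : Nat.Primes, (1 : ℝ≥0∞) / (p : ℕ) ^ s) < ∑' n, (1 : ℝ≥0∞) / a n) :
    ∃ k, (a k).primeFactorsList.length ≤ s - 1 :=
  stmt_4_general s a h1 hcop hgt
end

section
/- Let (a_n) be a strictly increasing sequence of natural numbers, all greater than 1 and pairwise relatively prime. If ∑ 1/a_n > P(2) = ∑_{p prime} 1/p², then some term a_k is prime. -/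
open scoped ENNReal

theorem stmt_5 (a : ℕ → ℕ) (hmono : StrictMono a) (h1 : ∀ n, 1 < a n)
    (hcop : ∀ m n, m ≠ n → Nat.Coprime (a m) (a n))
    (hgt : (∑' p : Nat.Primes, (1 : ℝ≥0∞) / (p : ℕ) ^ 2) < ∑' n, (1 : ℝ≥0∞) / a n) :
    ∃ k, (a k).Prime := by
  by_contra h
  push_neg at h
  set f : ℕ → Nat.Primes := fun n => ⟨(a n).minFac, Nat.minFac_prime (h1 n).ne'⟩ with hf
  have hinj : Function.Injective f := by
    intro m n hmn
    by_contra hne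
    have hcp := hcop m n hne
    have hd1 : (a m).minFac ∣ a m := Nat.minFac_dvd _
    have hd2 : (a m).minFac ∣ a n := by
      have : (f m : ℕ) = (f n : ℕ) := congrArg _ hmn
      simp only [hf] at this
      rw [this]; exact Nat.minFac_dvd _
    have := Nat.eq_one_of_dvd_coprimes hcp hd1 hd2
    exact absurd this (Nat.Prime.ne_one (Nat.minFac_prime (h1 m).ne'))
  have hle : ∀ n, (1 : ℝ≥0∞) / a n ≤ 1 / ((f n : ℕ) : ℝ≥0∞) ^ 2 := by
    intro n
    have hsq : ((f n : ℕ)) ^ 2 ≤ a n :=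
      Nat.minFac_sq_le_self (Nat.lt_of_lt_of_le Nat.zero_lt_one (h1 n).le) (h n)
    apply ENNReal.div_le_div_left
    exact_mod_cast (by exact_mod_cast Nat.cast_le.mpr hsq :
      (((f n : ℕ) ^ 2 : ℕ) : ℝ≥0∞) ≤ ((a n : ℕ) : ℝ≥0∞))
  have : ∑' n, (1 : ℝ≥0∞) / a n ≤ ∑' p : Nat.Primes, (1 : ℝ≥0∞) / (p : ℕ) ^ 2 :=
    le_trans (ENNReal.tsum_le_tsum hle)
      (ENNReal.tsum_comp_le_tsum_of_injective hinj (fun p => 1 / ((p : ℕ) : ℝ≥0∞) ^ 2))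
  exact absurd hgt (not_lt.mpr this)
end

section
/- If a_1 < a_2 < ... < a_k are pairwise relatively prime natural numbers, each greater than 1 and at most n, and k ≥ π(√n) + 1, then at least one a_i is prime. -/
/-!
If none of the `a i` is prime, the smallest prime factor of each is at most `√n`, and pairwise
coprimality makes these smallest prime factors distinct. So there are at most `π(√n)` of them.
-/

open Function

namespace Nat

theorem minFac_le_sqrt_of_not_prime {m n : ℕ} (hm₀ : 0 < m) (hmn : m ≤ n) (hm : ¬m.Prime) :
    m.minFac ≤ n.sqrt :=
  le_sqrt'.mpr <| (minFac_sq_le_self hm₀ hm).trans hmn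

theorem injective_minFac_of_pairwise_coprime {ι : Type*} {a : ι → ℕ} (ha : ∀ i, a i ≠ 1)
    (hcop : Pairwise (Coprime on a)) : Injective (fun i ↦ (a i).minFac) := by
  intro i j (hij : (a i).minFac = (a j).minFac)
  by_contra hne
  have hdvd : (a i).minFac ∣ Nat.gcd (a i) (a j) :=
    dvd_gcd (minFac_dvd _) (hij ▸ minFac_dvd _)
  rw [hcop hne] at hdvd
  exact (minFac_prime (ha i)).one_lt.ne' (eq_one_of_dvd_one hdvd)

theorem card_le_primeCounting_of_injective {ι : Type*} [Fintype ι] {f : ι → ℕ} {m : ℕ}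
    (hf : Injective f) (hprime : ∀ i, (f i).Prime) (hle : ∀ i, f i ≤ m) :
    Fintype.card ι ≤ primeCounting m := by
  rw [← primesLE_card_eq_primeCounting, ← Finset.card_univ]
  exact Finset.card_le_card_of_injOn f (fun i _ ↦ mem_primesLE.mpr ⟨hle i, hprime i⟩)
    hf.injOn

end Nat

theorem stmt_8_general (k n : ℕ) (a : Fin k → ℕ)
    (h1 : ∀ i, 1 < a i) (hle : ∀ i, a i ≤ n)
    (hcop : ∀ i j, i ≠ j → Nat.Coprime (a i) (a j))
    (hk : Nat.primeCounting (Nat.sqrt n) + 1 ≤ k) :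
    ∃ i, (a i).Prime := by
  by_contra! hcomposite
  have hcard : k ≤ Nat.primeCounting (Nat.sqrt n) := by
    simpa using Nat.card_le_primeCounting_of_injective
      (Nat.injective_minFac_of_pairwise_coprime (fun i ↦ (h1 i).ne') hcop)
      (fun i ↦ Nat.minFac_prime (h1 i).ne')
      (fun i ↦ Nat.minFac_le_sqrt_of_not_prime (Nat.zero_lt_of_lt (h1 i)) (hle i) (hcomposite i))
  omega

theorem stmt_8 (k n : ℕ) (a : Fin k → ℕ) (hmono : StrictMono a)
    (h1 : ∀ i, 1 < a i) (hle : ∀ i, a i ≤ n)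
    (hcop : ∀ i j, i ≠ j → Nat.Coprime (a i) (a j))
    (hk : Nat.primeCounting (Nat.sqrt n) + 1 ≤ k) :
    ∃ i, (a i).Prime :=
  stmt_8_general k n a h1 hle hcop hk
end

section
/- If (a_n) is a sequence of pairwise relatively prime natural numbers, each greater than 1 and each composite, then ∑ 1/a_n ≤ ∑_{p prime} 1/p², with equality attained by the sequence a_n = p_n² where p_n is the n-th prime. -/
open scoped ENNReal

noncomputable def primeEquiv : ℕ ≃ Nat.Primes where
  toFun n := ⟨Nat.nth Nat.Prime n, Nat.prime_nth_prime n⟩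
  invFun p := Nat.count Nat.Prime p
  left_inv n := by
    simp [Nat.count_nth_of_infinite Nat.infinite_setOf_prime]
  right_inv p := by
    exact Subtype.ext (Nat.nth_count p.2)

theorem stmt_12 :
    (∀ a : ℕ → ℕ, (∀ n, 1 < a n) → (∀ n, ¬ (a n).Prime) →
      (∀ m n, m ≠ n → Nat.Coprime (a m) (a n)) →
      (∑' n, (1 : ℝ≥0∞) / a n) ≤ ∑' p : Nat.Primes, (1 : ℝ≥0∞) / (p : ℕ) ^ 2) ∧
    (∑' n : ℕ, (1 : ℝ≥0∞) / (Nat.nth Nat.Prime n) ^ 2)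
      = ∑' p : Nat.Primes, (1 : ℝ≥0∞) / (p : ℕ) ^ 2 := by
  constructor
  · intro a h1 hnp hcop
    set f : ℕ → Nat.Primes := fun n =>
      ⟨(a n).minFac, Nat.minFac_prime (h1 n).ne'⟩ with hf
    have hinj : Function.Injective f := by
      intro m n hmn
      by_contra hne
      have h := hcop m n hne
      have heq : (a m).minFac = (a n).minFac := congrArg Subtype.val hmn
      have hd : (a m).minFac ∣ Nat.gcd (a m) (a n) :=
        Nat.dvd_gcd (Nat.minFac_dvd _) (heq ▸ Nat.minFac_dvd (a n))
      rw [h] at hd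
      exact (Nat.minFac_prime (h1 m).ne').one_lt.ne'
        (Nat.eq_one_of_dvd_one hd)
    calc (∑' n, (1 : ℝ≥0∞) / a n)
        ≤ ∑' n, (1 : ℝ≥0∞) / ((f n : ℕ) ^ 2) := by
          apply ENNReal.tsum_le_tsum
          intro n
          apply ENNReal.div_le_div_left
          exact_mod_cast Nat.minFac_sq_le_self (Nat.lt_of_lt_of_le Nat.zero_lt_one (h1 n).le) (hnp n)
      _ ≤ ∑' p : Nat.Primes, (1 : ℝ≥0∞) / (p : ℕ) ^ 2 :=
          ENNReal.tsum_comp_le_tsum_of_injective hinj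
            (fun p => (1 : ℝ≥0∞) / (p : ℕ) ^ 2)
  · exact primeEquiv.tsum_eq (fun p : Nat.Primes => (1 : ℝ≥0∞) / (p : ℕ) ^ 2)
end

section
/- If (a_n) is a strictly increasing sequence of pairwise relatively prime natural numbers, all greater than 1, such that all but finitely many terms are composite, then ∑ 1/a_n converges. -/
theorem stmt_13 (a : ℕ → ℕ) (hmono : StrictMono a) (h1 : ∀ n, 1 < a n)
    (hcop : ∀ m n, m ≠ n → Nat.Coprime (a m) (a n))
    (hfin : {n | (a n).Prime}.Finite) :
    Summable (fun n => (1 : ℝ) / a n) := by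
  rw [← hfin.summable_compl_iff]
  have h2 : ∀ n : ℕ, 2 ≤ (a n).minFac := fun n =>
    (Nat.minFac_prime (h1 n).ne').two_le
  have hinj : Function.Injective (fun n : ↥{n | (a n).Prime}ᶜ => (a ↑n).minFac) := by
    intro m n h
    by_contra hne
    have h' : (a (m : ℕ)).minFac = (a (n : ℕ)).minFac := h
    have hmn : (m : ℕ) ≠ (n : ℕ) := fun h'' => hne (Subtype.ext h'')
    have hd : (a (m : ℕ)).minFac ∣ Nat.gcd (a m) (a n) :=
      Nat.dvd_gcd (Nat.minFac_dvd _) (h' ▸ Nat.minFac_dvd _)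
    rw [hcop _ _ hmn] at hd
    have := Nat.le_of_dvd one_pos hd
    have := h2 (m : ℕ)
    omega
  have hsum : Summable (fun n : ↥{n | (a n).Prime}ᶜ => (1 : ℝ) / ((a ↑n).minFac) ^ 2) :=
    ((Real.summable_one_div_nat_pow.mpr one_lt_two).comp_injective hinj)
  refine hsum.of_nonneg_of_le
    (fun n => div_nonneg one_pos.le (Nat.cast_nonneg _)) (fun n => ?_)
  have hsq : (a (n : ℕ)).minFac ^ 2 ≤ a n :=
    Nat.minFac_sq_le_self (lt_trans one_pos (h1 _)) n.2
  have hpos : (0 : ℝ) < ((a (n : ℕ)).minFac : ℝ) ^ 2 := by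
    have := h2 (n : ℕ); positivity
  have := one_div_le_one_div_of_le hpos (by exact_mod_cast hsq :
    ((a (n : ℕ)).minFac : ℝ) ^ 2 ≤ (a (n : ℕ) : ℝ))
  simpa using this
end
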